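/- arXiv:2410.09526 — 2 statements merged into one kernel-verified Lean document; each statement's English description precedes it below -/
import Mathlib

section
/- With f_p as in the preceding example (f_p(x) = (1−p)(3x−1) on [0,1/3], 0 on [1/3,2/3], p(2−3x) on [2/3,1]), for ε ∈ (0,1/2) there is no continuous map φ : [0,1] → [0,1] with φ(p) ∈ Ω_{f_p}(ε) for all p ∈ [0,1]. -/
open Set

noncomputable def exF (p x : ℝ) : ℝ :=
  if x ≤ 1/3 then (1 - p) * (3*x - 1)
  else if x ≤ 2/3 then 0
  else p * (2 - 3*x)

noncomputable def exArgmin (p ε : ℝ) : Set ℝ :=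
  {x ∈ Icc (0:ℝ) 1 | exF p x ≤ sInf (exF p '' Icc (0:ℝ) 1) + ε}

/-- For `ε ∈ (0,1/2)`, there is no continuous selection `φ : [0,1] → [0,1]` of the
`ε`-argmin map `p ↦ Ω_{f_p}(ε)`. -/
theorem example_no_continuous_selection (ε : ℝ) (hε : ε ∈ Ioo (0:ℝ) (1/2)) :
    ¬ ∃ φ : ℝ → ℝ, ContinuousOn φ (Icc (0:ℝ) 1) ∧
        ∀ p ∈ Icc (0:ℝ) 1, φ p ∈ exArgmin p ε := by
  rintro ⟨φ, hφc, hφ⟩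
  obtain ⟨hε0, hε2⟩ := hε
  have key : ∀ p ∈ Icc (0:ℝ) 1, ∀ x, x ∈ exArgmin p ε → exF p x < 0 := by
    intro p hp x hx
    obtain ⟨hx1, hx2⟩ := hx
    have hbdd : BddBelow (exF p '' Icc (0:ℝ) 1) := by
      refine ⟨-1, ?_⟩
      rintro y ⟨z, hz, rfl⟩
      unfold exF
      obtain ⟨hp0, hp1⟩ := hp
      obtain ⟨hz0, hz1⟩ := hz
      split_ifs with h1 h2 <;> nlinarith
    have h0 : exF p 0 = p - 1 := by norm_num [exF]
    have h1 : exF p 1 = -p := by norm_num [exF]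
    have hinf : sInf (exF p '' Icc (0:ℝ) 1) ≤ -(1/2) := by
      rcases le_or_gt p (1/2) with h | h
      · calc sInf (exF p '' Icc (0:ℝ) 1) ≤ exF p 0 :=
              csInf_le hbdd ⟨0, by norm_num, rfl⟩
          _ ≤ -(1/2) := by rw [h0]; linarith
      · calc sInf (exF p '' Icc (0:ℝ) 1) ≤ exF p 1 :=
              csInf_le hbdd ⟨1, by norm_num, rfl⟩
          _ ≤ -(1/2) := by rw [h1]; linarith
    linarith
  have h0 : (0:ℝ) ∈ Icc (0:ℝ) 1 := by norm_num
  have h1 : (1:ℝ) ∈ Icc (0:ℝ) 1 := by norm_num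
  have hφ0 : φ 0 < 1/3 := by
    have := key 0 h0 (φ 0) (hφ 0 h0)
    unfold exF at this
    split_ifs at this <;> nlinarith
  have hφ1 : 2/3 < φ 1 := by
    have := key 1 h1 (φ 1) (hφ 1 h1)
    unfold exF at this
    split_ifs at this <;> nlinarith
  have hivt := intermediate_value_Icc (by norm_num : (0:ℝ) ≤ 1) hφc
  obtain ⟨p, hp, hφp⟩ := hivt (⟨by linarith, by linarith⟩ : (1/2:ℝ) ∈ Icc (φ 0) (φ 1))
  have := key p hp (φ p) (hφ p hp)
  rw [hφp] at this
  norm_num [exF] at this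
end

section
/- Let (X,d) and (P,μ) be metric spaces and suppose the family (f_p)_{p∈P} of proper, bounded-below functions satisfies the uniform epi-continuity conditions (1) and (2). Then the value function p ↦ inf_X f_p is continuous on P. -/
/-!
Condition (1) makes the value function upper semicontinuous: a point nearly minimizing `f p`
is moved to a point where `f q` is at most `ε` larger. Condition (2) makes it lower
semicontinuous, since `inf f_p ≤ (f_p)_ε` everywhere, so `f q ≥ inf f_p - ε` uniformly for `q`
near `p`. An `EReal`-valued function that is both is continuous.
-/

noncomputable def reg {X : Type*} [MetricSpace X] (v : X → EReal) (ε : ℝ) (x : X) : EReal :=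
  ⨅ y ∈ Metric.closedBall x ε, v y

open Filter Topology

namespace EReal

lemma exists_pos_add_lt {a b : EReal} (h : a < b) : ∃ ε : ℝ, 0 < ε ∧ a + ε < b := by
  obtain ⟨c, hac, hcb⟩ := exists_between_coe_real h
  obtain ⟨d, hcd, hdb⟩ := exists_between_coe_real hcb
  refine ⟨d - c, _root_.sub_pos.2 (EReal.coe_lt_coe_iff.1 hcd), ?_⟩
  calc a + ↑(d - c) < c + ↑(d - c) := add_lt_add_right_coe hac _
    _ = d := by rw [← coe_add, add_sub_cancel]
    _ < b := hdb

lemma exists_pos_lt_sub {a b : EReal} (h : a < b) : ∃ ε : ℝ, 0 < ε ∧ a < b - ε := by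
  obtain ⟨ε, hε, hlt⟩ := exists_pos_add_lt h
  exact ⟨ε, hε, (EReal.lt_sub_iff_add_lt (.inl (coe_ne_bot ε)) (.inl (coe_ne_top ε))).2 hlt⟩

end EReal

section Semicontinuity

variable {P : Type*} [TopologicalSpace P] {p : P}

theorem upperSemicontinuousAt_iInf_of_eventually_exists_le_add {X : Type*} {f : P → X → EReal}
    (h : ∀ x (ε : ℝ), 0 < ε → ∀ᶠ q in 𝓝 p, ∃ xq, f q xq ≤ f p x + ε) :
    UpperSemicontinuousAt (fun q => ⨅ x, f q x) p := by
  intro y hy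
  obtain ⟨x, hx⟩ := iInf_lt_iff.1 hy
  obtain ⟨ε, hε, hxε⟩ := EReal.exists_pos_add_lt hx
  filter_upwards [h x ε hε] with q ⟨xq, hxq⟩
  exact (iInf_le _ xq).trans_lt (hxq.trans_lt hxε)

theorem lowerSemicontinuousAt_of_eventually_sub_le {g : P → EReal}
    (h : ∀ ε : ℝ, 0 < ε → ∀ᶠ q in 𝓝 p, g p - ε ≤ g q) : LowerSemicontinuousAt g p := by
  intro y hy
  obtain ⟨ε, hε, hyε⟩ := EReal.exists_pos_lt_sub hy
  filter_upwards [h ε hε] with q hq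
  exact hyε.trans_le hq

end Semicontinuity

lemma iInf_le_reg {X : Type*} [MetricSpace X] (v : X → EReal) (ε : ℝ) (x : X) :
    ⨅ y, v y ≤ reg v ε x :=
  le_iInf₂ fun y _ => iInf_le v y

theorem value_function_continuous_general {X P : Type*} [MetricSpace X] [MetricSpace P]
    (f : P → X → EReal)
    (hcond1 : ∀ (p : P) (x : X) (ε : ℝ), 0 < ε → ∃ δ : ℝ, 0 < δ ∧
      ∀ q ∈ Metric.closedBall p δ, ∃ xq ∈ Metric.closedBall x ε,
        f q xq ≤ f p x + (ε : EReal))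
    (hcond2 : ∀ (p : P) (ε : ℝ), 0 < ε → ∃ δ : ℝ, 0 < δ ∧
      ∀ (x : X), ∀ q ∈ Metric.closedBall p δ,
        reg (f p) ε x - (ε : EReal) ≤ f q x) :
    Continuous (fun p => ⨅ x, f p x) := by
  refine continuous_iff_lower_upperSemicontinuous.2 ⟨fun p => ?_, fun p => ?_⟩
  · refine lowerSemicontinuousAt_of_eventually_sub_le fun ε hε => ?_
    obtain ⟨δ, hδ, hreg⟩ := hcond2 p ε hε
    filter_upwards [Metric.closedBall_mem_nhds p hδ] with q hq
    exact le_iInf fun x => (EReal.sub_le_sub (iInf_le_reg (f p) ε x) le_rfl).trans (hreg x q hq)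
  · refine upperSemicontinuousAt_iInf_of_eventually_exists_le_add fun x ε hε => ?_
    obtain ⟨δ, hδ, hmove⟩ := hcond1 p x ε hε
    filter_upwards [Metric.closedBall_mem_nhds p hδ] with q hq
    obtain ⟨xq, -, hxq⟩ := hmove q hq
    exact ⟨xq, hxq⟩

/-- Under uniform epi-continuity (conditions (1) and (2)), the value function
`p ↦ inf_X f_p` is continuous. -/
theorem value_function_continuous {X P : Type*} [MetricSpace X] [MetricSpace P]
    (f : P → X → EReal)
    (hproper : ∀ p, ∃ x, f p x ≠ ⊤)
    (hbdd : ∀ p, ∃ m : ℝ, ∀ x, (m : EReal) ≤ f p x)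
    (hcond1 : ∀ (p : P) (x : X) (ε : ℝ), 0 < ε → ∃ δ : ℝ, 0 < δ ∧
      ∀ q ∈ Metric.closedBall p δ, ∃ xq ∈ Metric.closedBall x ε,
        f q xq ≤ f p x + (ε : EReal))
    (hcond2 : ∀ (p : P) (ε : ℝ), 0 < ε → ∃ δ : ℝ, 0 < δ ∧
      ∀ (x : X), ∀ q ∈ Metric.closedBall p δ,
        reg (f p) ε x - (ε : EReal) ≤ f q x) :
    Continuous (fun p => ⨅ x, f p x) :=
  value_function_continuous_general f hcond1 hcond2
end
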